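/- arXiv:1603.04594 — 2 statements merged into one kernel-verified Lean document; each statement's English description precedes it below -/
import Mathlib

section
/- Factors of leading terms are mutually ⊏-incomparable: let n ∈ ℤ and let (i₁,j₁), …, (i_t,j_t), (i_{t+1},j_{t+1}), …, (i_s,j_s) be colors with i₁ ≤ … ≤ i_t ≤ j_t ≤ … ≤ j₁ ≤ i_{t+1} ≤ … ≤ i_s ≤ j_s ≤ … ≤ j_{t+1} and (i_p,j_p) ≠ (i_{p+1},j_{p+1}) for all p. Then the variables x_{i_p j_p}(−n−1) for 1 ≤ p ≤ t together with the variables x_{i_p j_p}(−n) for t+1 ≤ p ≤ s are pairwise ⊏-incomparable. -/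
/-- A color `(i,j)`; the colors of `Γ` satisfy `1 ≤ i ≤ j ≤ ℓ`. -/
abbrev Color : Type := ℤ × ℤ

/-- A variable: the pair `((i,j), n)` represents the variable `x_{ij}(−n)`
with color `(i,j)` and degree `−n`. -/
abbrev Var : Type := Color × ℤ

/-- Membership of a color in the set of colors `Γ = {(i,j) : 1 ≤ i ≤ j ≤ ℓ}`. -/
def inGamma (ℓ : ℕ) (c : Color) : Prop := 1 ≤ c.1 ∧ c.1 ≤ c.2 ∧ c.2 ≤ (ℓ : ℤ)

/-- Membership of a variable in the set of variables `Γ̃ = Γ × ℤ`. -/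
def inVars (ℓ : ℕ) (v : Var) : Prop := inGamma ℓ v.1

/-- The relation `⊏` on variables: `x_{ij}(−n) ⊏ x_{i'j'}(−n')` iff
`n ≥ n' + 2`, or (`n = n' + 1` and `j > i'`), or
(`n = n'` and `i > i'` and `j > j'`). -/
def sqsub (x y : Var) : Prop :=
  y.2 + 2 ≤ x.2 ∨ (x.2 = y.2 + 1 ∧ y.1.1 < x.1.2) ∨
    (x.2 = y.2 ∧ y.1.1 < x.1.1 ∧ y.1.2 < x.1.2)

/-- A diagonal path of colors: a list `(i₁,j₁), …, (i_t,j_t)` of colors of `Γ`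
with `i₁ ≤ … ≤ i_t ≤ j_t ≤ … ≤ j₁` and consecutive colors distinct. -/
def DiagPath (ℓ : ℕ) (L : List Color) : Prop :=
  (∀ c ∈ L, inGamma ℓ c) ∧
    L.Chain' (fun a b => a.1 ≤ b.1 ∧ b.2 ≤ a.2 ∧ a ≠ b)

/-- A monomial `π` (a finite multiset of variables) satisfies the level-`k`
difference conditions (DC) if for every `n ∈ ℤ` and every pair of diagonal
paths `L₁ = (i₁,j₁), …, (i_t,j_t)` and `L₂ = (i_{t+1},j_{t+1}), …, (i_s,j_s)`
with `j₁ ≤ i_{t+1}` and `(i_t,j_t) ≠ (i_{t+1},j_{t+1})`, the total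
multiplicity in `π` of the variables `x_{i_p j_p}(−n−1)` for `1 ≤ p ≤ t`
together with the variables `x_{i_p j_p}(−n)` for `t+1 ≤ p ≤ s` is at
most `k`. -/
def DC (ℓ : ℕ) (k : ℕ) (π : Multiset Var) : Prop :=
  ∀ (n : ℤ) (L₁ L₂ : List Color),
    DiagPath ℓ L₁ → DiagPath ℓ L₂ →
    (∀ c₁ ∈ L₁.head?, ∀ c₂ ∈ L₂.head?, c₁.2 ≤ c₂.1) →
    (∀ c₁ ∈ L₁.getLast?, ∀ c₂ ∈ L₂.head?, c₁ ≠ c₂) →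
    (L₁.map (fun c => π.count (c, n + 1))).sum +
      (L₂.map (fun c => π.count (c, n))).sum ≤ k

/-- A monomial `π` satisfies the initial conditions (IC) for the dominant
weight `Λ = k₀Λ₀ + ⋯ + k_ℓΛ_ℓ` (encoded by `kc : ℕ → ℕ`, `kc r = k_r`) if for
every diagonal path `(i₁,j₁), …, (i_t,j_t)` the total multiplicity in `π` of
the variables `x_{i_p j_p}(−1)`, `1 ≤ p ≤ t`, is at most
`k₀ + k₁ + ⋯ + k_{j₁−1}`. -/
def IC (ℓ : ℕ) (kc : ℕ → ℕ) (π : Multiset Var) : Prop :=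
  ∀ L : List Color, DiagPath ℓ L →
    ∀ c ∈ L.head?,
      (L.map (fun c' => π.count (c', 1))).sum ≤ ∑ r ∈ Finset.range c.2.toNat, kc r

/-!
Along a diagonal path the colors are nested intervals `[i, j]`, and two variables of the same
degree with nested colors are `⊏`-incomparable. Every color of the first path ends before every
color of the second begins (`j_p ≤ j₁ ≤ i_{t+1} ≤ i_q`), which is exactly what rules out `⊏`
between a variable of degree `−n−1` and one of degree `−n`.
-/

def Nested (a b : Color) : Prop := a.1 ≤ b.1 ∧ b.2 ≤ a.2

instance : Std.Refl Nested := ⟨fun _ => ⟨le_rfl, le_rfl⟩⟩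

instance : IsTrans Color Nested :=
  ⟨fun _ _ _ hab hbc => ⟨hab.1.trans hbc.1, hbc.2.trans hab.2⟩⟩

theorem DiagPath.pairwise_nested {ℓ : ℕ} {L : List Color} (h : DiagPath ℓ L) :
    L.Pairwise Nested :=
  List.isChain_iff_pairwise.mp (h.2.imp fun _ _ hab => ⟨hab.1, hab.2.1⟩)

theorem Nested.not_sqsub {a b : Color} (h : Nested a b) (m : ℤ) :
    ¬ sqsub (a, m) (b, m) ∧ ¬ sqsub (b, m) (a, m) := by
  obtain ⟨h₁, h₂⟩ := h
  simp only [sqsub]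
  omega

theorem not_sqsub_succ_of_snd_le_fst {a b : Color} (h : a.2 ≤ b.1) (m : ℤ) :
    ¬ sqsub (a, m + 1) (b, m) ∧ ¬ sqsub (b, m) (a, m + 1) := by
  simp only [sqsub]
  omega

theorem snd_le_fst_of_mem_diagPath {ℓ : ℕ} {L₁ L₂ : List Color}
    (h1 : DiagPath ℓ L₁) (h2 : DiagPath ℓ L₂)
    (hj : ∀ c₁ ∈ L₁.head?, ∀ c₂ ∈ L₂.head?, c₁.2 ≤ c₂.1)
    {c₁ c₂ : Color} (hc₁ : c₁ ∈ L₁) (hc₂ : c₂ ∈ L₂) : c₁.2 ≤ c₂.1 :=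
  calc c₁.2 ≤ (L₁.head (List.ne_nil_of_mem hc₁)).2 := (h1.pairwise_nested.rel_head hc₁).2
    _ ≤ (L₂.head (List.ne_nil_of_mem hc₂)).1 :=
      hj _ (List.head?_eq_some_head _) _ (List.head?_eq_some_head _)
    _ ≤ c₂.1 := (h2.pairwise_nested.rel_head hc₂).1

theorem stmt10_general (ℓ : ℕ) (n : ℤ) (L₁ L₂ : List Color)
    (h1 : DiagPath ℓ L₁) (h2 : DiagPath ℓ L₂)
    (hj : ∀ c₁ ∈ L₁.head?, ∀ c₂ ∈ L₂.head?, c₁.2 ≤ c₂.1) :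
    (L₁.map (fun c => ((c, n + 1) : Var)) ++
      L₂.map (fun c => ((c, n) : Var))).Pairwise
        (fun x y => ¬ sqsub x y ∧ ¬ sqsub y x) := by
  refine List.pairwise_append.mpr ⟨?_, ?_, ?_⟩
  · exact List.pairwise_map.mpr (h1.pairwise_nested.imp fun h => h.not_sqsub (n + 1))
  · exact List.pairwise_map.mpr (h2.pairwise_nested.imp fun h => h.not_sqsub n)
  · simp only [List.mem_map, forall_exists_index, and_imp]
    rintro _ c₁ hc₁ rfl _ c₂ hc₂ rfl
    exact not_sqsub_succ_of_snd_le_fst (snd_le_fst_of_mem_diagPath h1 h2 hj hc₁ hc₂) n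

/-- Factors of leading terms are mutually `⊏`-incomparable: given diagonal
paths `L₁ = (i₁,j₁), …, (i_t,j_t)` and `L₂ = (i_{t+1},j_{t+1}), …, (i_s,j_s)`
with `j₁ ≤ i_{t+1}` and `(i_t,j_t) ≠ (i_{t+1},j_{t+1})`, the variables
`x_{i_p j_p}(−n−1)` for `1 ≤ p ≤ t` together with the variables
`x_{i_p j_p}(−n)` for `t+1 ≤ p ≤ s` are pairwise `⊏`-incomparable. -/
theorem stmt10 (ℓ : ℕ) (n : ℤ) (L₁ L₂ : List Color)
    (h1 : DiagPath ℓ L₁) (h2 : DiagPath ℓ L₂)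
    (hj : ∀ c₁ ∈ L₁.head?, ∀ c₂ ∈ L₂.head?, c₁.2 ≤ c₂.1)
    (hd : ∀ c₁ ∈ L₁.getLast?, ∀ c₂ ∈ L₂.head?, c₁ ≠ c₂) :
    (L₁.map (fun c => ((c, n + 1) : Var)) ++
      L₂.map (fun c => ((c, n) : Var))).Pairwise
        (fun x y => ¬ sqsub x y ∧ ¬ sqsub y x) :=
  stmt10_general ℓ n L₁ L₂ h1 h2 hj
end

section
/- Equivalence of the two definitions of initial conditions for fundamental weights: let 0 ≤ r ≤ ℓ and let π be a monomial satisfying level-1 difference conditions. Then π satisfies initial conditions for Λ_r in the general sense (with k_r = 1 and k_s = 0 for s ≠ r) if and only if π contains no variable x_{ij}(−1) with i ≤ j ≤ r. -/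
theorem DiagPath.singleton {ℓ : ℕ} {c : Color} (hc : inGamma ℓ c) : DiagPath ℓ [c] :=
  ⟨by simpa using hc, List.isChain_singleton c⟩

theorem DiagPath.snd_le_head {ℓ : ℕ} {c c' : Color} {L : List Color}
    (hL : DiagPath ℓ (c :: L)) (hc' : c' ∈ c :: L) : c'.2 ≤ c.2 := by
  have hchain : ((c :: L).map Prod.snd).IsChain (· ≥ ·) :=
    (List.isChain_map Prod.snd).2 (hL.2.imp fun _ _ h => h.2.1)
  rcases List.pairwise_cons.1 (List.isChain_iff_pairwise.1 hchain) with ⟨hhead, -⟩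
  rcases List.mem_cons.1 hc' with rfl | hmem
  · exact le_rfl
  · exact hhead _ (List.mem_map_of_mem hmem)

theorem DC.sum_count_le {ℓ k : ℕ} {π : Multiset Var} (hDC : DC ℓ k π) (n : ℤ) {L : List Color}
    (hL : DiagPath ℓ L) : (L.map fun c => π.count (c, n)).sum ≤ k := by
  simpa using hDC n [] L ⟨by simp, List.isChain_nil⟩ hL (by simp) (by simp)

theorem stmt14_general (ℓ r : ℕ) (π : Multiset Var)
    (hπ : ∀ v ∈ π, inVars ℓ v) (hDC : DC ℓ 1 π) :
    IC ℓ (fun s => if s = r then 1 else 0) π ↔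
      ∀ c : Color, c.2 ≤ (r : ℤ) → ((c, (1 : ℤ)) : Var) ∉ π := by
  simp only [IC, Finset.sum_ite_eq', Finset.mem_range]
  constructor
  · intro hIC c hc hmem
    have h := hIC [c] (DiagPath.singleton (hπ _ hmem)) c rfl
    simp [show ¬ r < c.2.toNat by omega, Multiset.count_eq_zero] at h
    exact h hmem
  · rintro h (_ | ⟨c, L⟩) hL c' ⟨⟩
    split_ifs with hrc
    · exact hDC.sum_count_le 1 hL
    · refine (List.sum_eq_zero fun x hx => ?_).le
      obtain ⟨c', hc', rfl⟩ := List.mem_map.1 hx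
      exact Multiset.count_eq_zero.2 (h c' ((hL.snd_le_head hc').trans (by omega)))

/-- Equivalence of the two definitions of initial conditions for fundamental
weights: for `0 ≤ r ≤ ℓ` and a monomial `π` satisfying the level-1 difference
conditions, `π` satisfies the initial conditions for `Λ_r` in the general
sense (with `k_r = 1` and `k_s = 0` for `s ≠ r`) if and only if `π` contains
no variable `x_{ij}(−1)` with `i ≤ j ≤ r`. -/
theorem stmt14 (ℓ r : ℕ) (hr : r ≤ ℓ) (π : Multiset Var)
    (hπ : ∀ v ∈ π, inVars ℓ v) (hDC : DC ℓ 1 π) :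
    IC ℓ (fun s => if s = r then 1 else 0) π ↔
      ∀ c : Color, c.2 ≤ (r : ℤ) → ((c, (1 : ℤ)) : Var) ∉ π :=
  stmt14_general ℓ r π hπ hDC
end
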